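/- arXiv:1510.01791 — 4 statements merged into one kernel-verified Lean document; each statement's English description precedes it below -/
import Mathlib

section
/- If h : ℝⁿ → ℝ is convex and ε > 0, then the function (λ, ν) ↦ (λ + ε) · h(ν/(λ + ε)) + h(0)·(λ − 1) is convex on {(λ, ν) : λ ≥ 0}. -/
/-!
The perspective `(t, x) ↦ t f(x / t)` of a convex function `f` is convex on `t > 0`: at a convex
combination of `(t, x)` and `(t', y)` with weights `a, b`, the point `(a x + b y) / (a t + b t')` is
the convex combination of `x / t` and `y / t'` with weights `a t / (a t + b t')` and
`b t' / (a t + b t')`, and Jensen's inequality for `f` at these weights, multiplied by `a t + b t'`,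
is the required inequality. The modification is this perspective translated by `ε` in `λ`, which maps
`λ ≥ 0` into `t > 0`, plus an affine function of `λ`.
-/

lemma perspective_combo_eq {𝕜 E : Type*} [Field 𝕜] [AddCommGroup E] [Module 𝕜 E]
    {t t' a b : 𝕜} (ht : t ≠ 0) (ht' : t' ≠ 0) (hc : a * t + b * t' ≠ 0) (x y : E) :
    (a * t + b * t')⁻¹ • (a • x + b • y) =
      (a * t / (a * t + b * t')) • (t⁻¹ • x) + (b * t' / (a * t + b * t')) • (t'⁻¹ • y) := by
  match_scalars <;> field_simp

theorem ConvexOn.perspective {𝕜 E : Type*} [Field 𝕜] [LinearOrder 𝕜] [IsStrictOrderedRing 𝕜]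
    [AddCommGroup E] [Module 𝕜 E] {s : Set E} {f : E → 𝕜} (hf : ConvexOn 𝕜 s f) :
    ConvexOn 𝕜 {p : 𝕜 × E | 0 < p.1 ∧ p.1⁻¹ • p.2 ∈ s} (fun p => p.1 * f (p.1⁻¹ • p.2)) := by
  have weights : ∀ ⦃t t' a b : 𝕜⦄, 0 < t → 0 < t' → 0 ≤ a → 0 ≤ b → a + b = 1 →
      0 < a * t + b * t' ∧ 0 ≤ a * t / (a * t + b * t') ∧ 0 ≤ b * t' / (a * t + b * t') ∧
        a * t / (a * t + b * t') + b * t' / (a * t + b * t') = 1 := by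
    intro t t' a b ht ht' ha hb hab
    have hc : 0 < a * t + b * t' := convex_Ioi (0 : 𝕜) ht ht' ha hb hab
    exact ⟨hc, by positivity, by positivity, by field_simp⟩
  refine ⟨?_, ?_⟩
  · rintro p ⟨hp, hps⟩ q ⟨hq, hqs⟩ a b ha hb hab
    obtain ⟨hc, hw₁, hw₂, hw⟩ := weights hp hq ha hb hab
    refine ⟨hc, ?_⟩
    simp only [Prod.fst_add, Prod.snd_add, Prod.smul_fst, Prod.smul_snd, smul_eq_mul]
    rw [perspective_combo_eq hp.ne' hq.ne' hc.ne']
    exact hf.1 hps hqs hw₁ hw₂ hw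
  · rintro p ⟨hp, hps⟩ q ⟨hq, hqs⟩ a b ha hb hab
    obtain ⟨hc, hw₁, hw₂, hw⟩ := weights hp hq ha hb hab
    simp only [Prod.fst_add, Prod.snd_add, Prod.smul_fst, Prod.smul_snd, smul_eq_mul]
    rw [perspective_combo_eq hp.ne' hq.ne' hc.ne']
    calc _ ≤ (a * p.1 + b * q.1) * (a * p.1 / (a * p.1 + b * q.1) * f (p.1⁻¹ • p.2) +
            b * q.1 / (a * p.1 + b * q.1) * f (q.1⁻¹ • q.2)) :=
          mul_le_mul_of_nonneg_left (hf.2 hps hqs hw₁ hw₂ hw) hc.le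
      _ = a * (p.1 * f (p.1⁻¹ • p.2)) + b * (q.1 * f (q.1⁻¹ • q.2)) := by
          field_simp

/-- The second Sawaya–Grossmann modification is convex on `{(λ, ν) : λ ≥ 0}`. -/
theorem sawaya_approx_convex {n : ℕ} (h : (Fin n → ℝ) → ℝ)
    (hconv : ConvexOn ℝ Set.univ h) (ε : ℝ) (hε : 0 < ε) :
    ConvexOn ℝ {p : ℝ × (Fin n → ℝ) | 0 ≤ p.1}
      (fun p => (p.1 + ε) * h ((p.1 + ε)⁻¹ • p.2) + h 0 * (p.1 - 1)) := by
  set D := {p : ℝ × (Fin n → ℝ) | 0 ≤ p.1}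
  have hD : Convex ℝ D := convex_halfSpace_ge (LinearMap.fst ℝ ℝ _).isLinear 0
  have hshifted : ConvexOn ℝ D (fun p => (p.1 + ε) * h ((p.1 + ε)⁻¹ • p.2)) := by
    have hpersp := (hconv.perspective.translate_left ((ε, 0) : ℝ × (Fin n → ℝ))).subset
      (s := D) (fun p (hp : 0 ≤ p.1) => ⟨by simp only [Prod.fst_add]; linarith, Set.mem_univ _⟩) hD
    simpa [Function.comp_def] using hpersp
  have haffine : ConvexOn ℝ D (fun p => h 0 * (p.1 - 1)) :=
    ⟨hD, fun p _ q _ a b _ _ hab => le_of_eq <| by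
      simp only [Prod.fst_add, Prod.smul_fst, smul_eq_mul]
      linear_combination h 0 * hab⟩
  exact hshifted.add haffine
end

section
/- Consider a single disjunction with terms j ∈ {1,…,m}, constraints h_j : ℝⁿ → ℝ, and bounds x^L ≤ x ≤ x^U. Then x satisfies the disjunction (i.e., there exists j with h_j(x) ≤ 0 and x^L ≤ x ≤ x^U) if and only if there exist binary λ_j ∈ {0,1} with ∑_j λ_j = 1, vectors ν_j^t, ν_j^f with λ_j x^L ≤ ν_j^t ≤ λ_j x^U, (1−λ_j) x^L ≤ ν_j^f ≤ (1−λ_j) x^U, x̂_j = ν_j^t + ν_j^f, h_j(x̂_j) ≤ 0 for all j, and x = ∑_j ν_j^t, provided each h_j has a feasible point in [x^L, x^U] (so that the false copies can be made feasible). -/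
/-! The true copy of the active term `j₀` carries `x` itself, while every other true copy is pinned
to `0` by its bounds `0 • xL ≤ νt j ≤ 0 • xU`. Each false copy lives in the full box, so it can be
placed at a feasible point of its own constraint; the false copy of `j₀` is pinned to `0` instead. -/

open Finset

theorem exists_eq_pi_single_of_forall_eq_zero_or_eq_one_of_sum_eq_one {ι R : Type*} [Fintype ι]
    [DecidableEq ι] [Semiring R] [CharZero R] {lam : ι → R}
    (h01 : ∀ j, lam j = 0 ∨ lam j = 1) (hsum : ∑ j, lam j = 1) :
    ∃ j₀, lam = Pi.single j₀ 1 := by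
  classical
  have hcard : #{j | lam j = 1} = 1 := by
    have hboole : ∑ j, lam j = ∑ j, if lam j = 1 then (1 : R) else 0 :=
      sum_congr rfl fun j _ => by rcases h01 j with hj | hj <;> simp [hj]
    rw [hboole, sum_boole] at hsum
    exact_mod_cast hsum
  obtain ⟨j₀, hj₀⟩ := card_eq_one.mp hcard
  refine ⟨j₀, funext fun j => ?_⟩
  have hmem : lam j = 1 ↔ j = j₀ := by
    simpa using congrArg (j ∈ ·) hj₀
  by_cases hj : j = j₀
  · subst hj
    simpa using hmem.mpr rfl
  · rw [Pi.single_eq_of_ne hj]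
    exact (h01 j).resolve_right (mt hmem.mp hj)

section TrueFalse

variable {ι E : Type*} [Fintype ι] [AddCommMonoid E] [PartialOrder E] [Module ℝ E]

/-- `νt j` and `νf j` are the true and false copies of term `j`; their sum is the paper's `x̂ⱼ`. -/
def IsTrueFalseSolution (h : ι → E → ℝ) (xL xU x : E) (lam : ι → ℝ) (νt νf : ι → E) : Prop :=
  (∀ j, lam j = 0 ∨ lam j = 1) ∧
  (∑ j, lam j = 1) ∧
  (∀ j, lam j • xL ≤ νt j ∧ νt j ≤ lam j • xU) ∧
  (∀ j, (1 - lam j) • xL ≤ νf j ∧ νf j ≤ (1 - lam j) • xU) ∧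
  (∀ j, h j (νt j + νf j) ≤ 0) ∧
  x = ∑ j, νt j

theorem eq_zero_of_zero_smul_le_of_le_zero_smul {c : ℝ} {a b v : E} (hc : c = 0)
    (hv : c • a ≤ v ∧ v ≤ c • b) : v = 0 := by
  subst hc
  simp only [zero_smul] at hv
  exact le_antisymm hv.2 hv.1

variable [DecidableEq ι] {h : ι → E → ℝ} {xL xU x : E}

theorem isTrueFalseSolution_single {y : ι → E} (hyL : ∀ j, xL ≤ y j) (hyU : ∀ j, y j ≤ xU)
    (hy : ∀ j, h j (y j) ≤ 0) (hxL : xL ≤ x) (hxU : x ≤ xU) {j₀ : ι} (hj₀ : h j₀ x ≤ 0) :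
    IsTrueFalseSolution h xL xU x (Pi.single j₀ 1) (Pi.single j₀ x) (Function.update y j₀ 0) := by
  refine ⟨fun j => ?_, by simp, fun j => ?_, fun j => ?_, fun j => ?_, by simp⟩ <;>
    by_cases hj : j = j₀ <;> simp_all

theorem IsTrueFalseSolution.disjunction {lam : ι → ℝ} {νt νf : ι → E}
    (hsol : IsTrueFalseSolution h xL xU x lam νt νf) :
    (xL ≤ x ∧ x ≤ xU) ∧ ∃ j, h j x ≤ 0 := by
  obtain ⟨h01, hsum, ht, hf, hh, hx⟩ := hsol
  obtain ⟨j₀, rfl⟩ := exists_eq_pi_single_of_forall_eq_zero_or_eq_one_of_sum_eq_one h01 hsum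
  have hνt : ∀ j ≠ j₀, νt j = 0 := fun j hj =>
    eq_zero_of_zero_smul_le_of_le_zero_smul (Pi.single_eq_of_ne hj 1) (ht j)
  have hνf : νf j₀ = 0 :=
    eq_zero_of_zero_smul_le_of_le_zero_smul (by simp) (hf j₀)
  have hxj₀ : x = νt j₀ := by
    rw [hx, sum_eq_single j₀ (fun j _ hj => hνt j hj) (by simp)]
  have hbox := ht j₀
  simp only [Pi.single_eq_same, one_smul] at hbox
  refine ⟨hxj₀ ▸ hbox, j₀, ?_⟩
  simpa [hνf, ← hxj₀] using hh j₀

end TrueFalse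

open Finset in
/-- The True-False Reformulation of a single disjunction is exact. -/
theorem true_false_reformulation_exact {n m : ℕ}
    (h : Fin m → (Fin n → ℝ) → ℝ) (xL xU x : Fin n → ℝ)
    (hfeas : ∀ j, ∃ y : Fin n → ℝ, xL ≤ y ∧ y ≤ xU ∧ h j y ≤ 0) :
    ((xL ≤ x ∧ x ≤ xU) ∧ ∃ j, h j x ≤ 0) ↔
      ∃ (lam : Fin m → ℝ) (νt νf : Fin m → Fin n → ℝ),
        (∀ j, lam j = 0 ∨ lam j = 1) ∧
        (∑ j, lam j = 1) ∧
        (∀ j, lam j • xL ≤ νt j ∧ νt j ≤ lam j • xU) ∧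
        (∀ j, (1 - lam j) • xL ≤ νf j ∧ νf j ≤ (1 - lam j) • xU) ∧
        (∀ j, h j (νt j + νf j) ≤ 0) ∧
        x = ∑ j, νt j := by
  constructor
  · rintro ⟨⟨hxL, hxU⟩, j₀, hj₀⟩
    choose y hyL hyU hy using hfeas
    exact ⟨_, _, _, isTrueFalseSolution_single hyL hyU hy hxL hxU hj₀⟩
  · rintro ⟨lam, νt, νf, hsol⟩
    exact IsTrueFalseSolution.disjunction hsol
end

section
/- Suppose D = {x ∈ [x^L, x^U] : h₁(x) ≤ 0} ∪ {x ∈ [x^L, x^U] : h₂(x) ≤ 0} with both sets nonempty. Then the projection onto x of the True-False Reformulation feasible set (with λ ∈ {0,1}²) equals D. -/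
/-!
With `λ ∈ {0,1}` the bounds `λ xᴸ ≤ ν ≤ λ xᵁ` force the copy carrying the zero multiplier to
vanish, so the active disjunct's true copy is `x` itself, lies in the box and satisfies its
constraint, while the inactive disjunct contributes nothing to `x`. Conversely, a point of one
disjunct is realised by making that disjunct active; the inactive one's false copy must satisfy
its own constraint inside the box, which is exactly what the nonemptiness hypotheses provide.
-/

namespace TrueFalse

variable {R E β : Type*} [Ring R] [AddCommGroup E] [PartialOrder E] [Module R E]
  [Zero β] [LE β]

/-- The constraints of one term of the True-False Reformulation, with indicator `lam` and
true/false copies `νt`, `νf`. -/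
def TermFeasible (xL xU : E) (h : E → β) (lam : R) (νt νf : E) : Prop :=
  (lam • xL ≤ νt ∧ νt ≤ lam • xU) ∧ ((1 - lam) • xL ≤ νf ∧ νf ≤ (1 - lam) • xU) ∧
    h (νt + νf) ≤ 0

theorem termFeasible_one_iff {xL xU : E} {h : E → β} {νt νf : E} :
    TermFeasible xL xU h (1 : R) νt νf ↔ νf = 0 ∧ xL ≤ νt ∧ νt ≤ xU ∧ h νt ≤ 0 := by
  simp only [TermFeasible, sub_self, zero_smul, one_smul, ← le_antisymm_iff (b := νf)]
  constructor
  · rintro ⟨⟨hL, hU⟩, rfl, hh⟩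
    exact ⟨rfl, hL, hU, by rwa [add_zero] at hh⟩
  · rintro ⟨rfl, hL, hU, hh⟩
    exact ⟨⟨hL, hU⟩, rfl, by rwa [add_zero]⟩

theorem termFeasible_zero_iff {xL xU : E} {h : E → β} {νt νf : E} :
    TermFeasible xL xU h (0 : R) νt νf ↔ νt = 0 ∧ xL ≤ νf ∧ νf ≤ xU ∧ h νf ≤ 0 := by
  simp only [TermFeasible, sub_zero, zero_smul, one_smul, ← le_antisymm_iff (b := νt)]
  constructor
  · rintro ⟨rfl, ⟨hL, hU⟩, hh⟩
    exact ⟨rfl, hL, hU, by rwa [zero_add] at hh⟩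
  · rintro ⟨rfl, hL, hU, hh⟩
    exact ⟨rfl, ⟨hL, hU⟩, by rwa [zero_add]⟩

theorem exists_termFeasible_zero {xL xU : E} {h : E → β}
    (hne : ∃ y, xL ≤ y ∧ y ≤ xU ∧ h y ≤ 0) : ∃ νf, TermFeasible xL xU h (0 : R) 0 νf :=
  let ⟨y, hy⟩ := hne
  ⟨y, termFeasible_zero_iff.2 ⟨rfl, hy⟩⟩

end TrueFalse

open TrueFalse in
/-- The projection onto `x` of the two-term True-False Reformulation feasible set
equals the disjunctive set `D`. -/
theorem true_false_projection {n : ℕ}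
    (h₁ h₂ : (Fin n → ℝ) → ℝ) (xL xU : Fin n → ℝ)
    (hne₁ : ∃ y, xL ≤ y ∧ y ≤ xU ∧ h₁ y ≤ 0)
    (hne₂ : ∃ y, xL ≤ y ∧ y ≤ xU ∧ h₂ y ≤ 0) :
    {x : Fin n → ℝ |
      ∃ (lam₁ lam₂ : ℝ) (ν₁t ν₂t ν₁f ν₂f : Fin n → ℝ),
        (lam₁ = 0 ∨ lam₁ = 1) ∧ (lam₂ = 0 ∨ lam₂ = 1) ∧ lam₁ + lam₂ = 1 ∧
        (lam₁ • xL ≤ ν₁t ∧ ν₁t ≤ lam₁ • xU) ∧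
        (lam₂ • xL ≤ ν₂t ∧ ν₂t ≤ lam₂ • xU) ∧
        ((1 - lam₁) • xL ≤ ν₁f ∧ ν₁f ≤ (1 - lam₁) • xU) ∧
        ((1 - lam₂) • xL ≤ ν₂f ∧ ν₂f ≤ (1 - lam₂) • xU) ∧
        h₁ (ν₁t + ν₁f) ≤ 0 ∧ h₂ (ν₂t + ν₂f) ≤ 0 ∧
        x = ν₁t + ν₂t} =
    ({x | xL ≤ x ∧ x ≤ xU ∧ h₁ x ≤ 0} ∪ {x | xL ≤ x ∧ x ≤ xU ∧ h₂ x ≤ 0}) := by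
  ext x
  simp only [Set.mem_ofPred_eq, Set.mem_union]
  constructor
  · rintro ⟨lam₁, lam₂, ν₁t, ν₂t, ν₁f, ν₂f, hlam₁, -, hsum, h₁t, h₂t, h₁f, h₂f, hh₁, hh₂, rfl⟩
    have hterm₁ : TermFeasible xL xU h₁ lam₁ ν₁t ν₁f := ⟨h₁t, h₁f, hh₁⟩
    have hterm₂ : TermFeasible xL xU h₂ lam₂ ν₂t ν₂f := ⟨h₂t, h₂f, hh₂⟩
    rcases hlam₁ with rfl | rfl
    · obtain rfl : lam₂ = 1 := by linarith
      obtain ⟨rfl, -⟩ := termFeasible_zero_iff.1 hterm₁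
      exact .inr (by simpa only [zero_add] using (termFeasible_one_iff.1 hterm₂).2)
    · obtain rfl : lam₂ = 0 := by linarith
      obtain ⟨rfl, -⟩ := termFeasible_zero_iff.1 hterm₂
      exact .inl (by simpa only [add_zero] using (termFeasible_one_iff.1 hterm₁).2)
  · rintro (hx | hx)
    · obtain ⟨ν₂f, h₂t, h₂f, hh₂⟩ := exists_termFeasible_zero (R := ℝ) hne₂
      obtain ⟨h₁t, h₁f, hh₁⟩ := termFeasible_one_iff (R := ℝ) (h := h₁) (νf := 0).2 ⟨rfl, hx⟩
      exact ⟨1, 0, x, 0, 0, ν₂f, .inr rfl, .inl rfl, add_zero 1, h₁t, h₂t, h₁f, h₂f, hh₁, hh₂,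
        (add_zero x).symm⟩
    · obtain ⟨ν₁f, h₁t, h₁f, hh₁⟩ := exists_termFeasible_zero (R := ℝ) hne₁
      obtain ⟨h₂t, h₂f, hh₂⟩ := termFeasible_one_iff (R := ℝ) (h := h₂) (νf := 0).2 ⟨rfl, hx⟩
      exact ⟨0, 1, 0, x, ν₁f, 0, .inl rfl, .inr rfl, zero_add 1, h₁t, h₂t, h₁f, h₂f, hh₁, hh₂,
        (zero_add x).symm⟩
end

section
/- If h : ℝ → ℝ is convex and nonconstant with h(0) > 0, then the function (λ, ν) ↦ λ · h(ν/(λ + ε)) need not be convex: there exists a convex h, ε > 0, and points in {(λ, ν) : 0 ≤ λ ≤ 1} at which the midpoint convexity inequality fails. -/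
/-!
On the edge `λ = 0` the function `λ h(ν/(λ+ε))` vanishes identically, whatever `ν` is.
Joining `(0, ν)` to `(1, 0)`, midpoint convexity would force `h(ν/(1+2ε)) ≤ h(0)` for every `ν`,
i.e. `h` bounded above by `h 0`; a nonconstant convex function on `ℝ` never is.
-/

open Set

theorem ConvexOn.exists_lt_of_ne {h : ℝ → ℝ} (hh : ConvexOn ℝ univ h)
    (hne : ∃ s t : ℝ, h s ≠ h t) (x : ℝ) : ∃ t, h x < h t := by
  obtain ⟨s, hs⟩ : ∃ s, h s ≠ h x := by
    obtain ⟨s, t, hst⟩ := hne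
    by_cases hsx : h s = h x
    · exact ⟨t, fun htx => hst (hsx.trans htx.symm)⟩
    · exact ⟨s, hsx⟩
  rcases hs.lt_or_gt with hlt | hgt
  · refine ⟨2 * x - s, ?_⟩
    have hmid := hh.2 (mem_univ s) (mem_univ (2 * x - s)) (by norm_num : (0 : ℝ) ≤ 1 / 2)
      (by norm_num : (0 : ℝ) ≤ 1 / 2) (by norm_num)
    have hx : (1 / 2 : ℝ) • s + (1 / 2 : ℝ) • (2 * x - s) = x := by simp only [smul_eq_mul]; ring
    rw [hx, smul_eq_mul, smul_eq_mul] at hmid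
    linarith
  · exact ⟨s, hgt⟩

theorem not_midpointConvex_mul_comp_div_add {h : ℝ → ℝ} {ε : ℝ} (hh : ConvexOn ℝ univ h)
    (hne : ∃ s t : ℝ, h s ≠ h t) (hε : 0 < ε) :
    ∃ p q : ℝ × ℝ, p.1 ∈ Icc (0 : ℝ) 1 ∧ q.1 ∈ Icc (0 : ℝ) 1 ∧
      ¬ ((((p.1 + q.1) / 2) * h (((p.2 + q.2) / 2) / ((p.1 + q.1) / 2 + ε))) ≤
          (p.1 * h (p.2 / (p.1 + ε)) + q.1 * h (q.2 / (q.1 + ε))) / 2) := by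
  obtain ⟨t, ht⟩ := hh.exists_lt_of_ne hne 0
  refine ⟨(0, t * (1 + 2 * ε)), (1, 0), by norm_num, by norm_num, ?_⟩
  have harg : t * (1 + 2 * ε) / 2 / (1 / 2 + ε) = t := by field_simp
  norm_num [harg]
  linarith

/-- The approximation `λ h(ν/(λ+ε))` can fail to be convex even for convex,
nonconstant `h` with `h 0 > 0`: midpoint convexity fails at some points. -/
theorem modified_approx_not_convex :
    ∃ (h : ℝ → ℝ) (ε : ℝ),
      ConvexOn ℝ Set.univ h ∧ (∃ s t : ℝ, h s ≠ h t) ∧ 0 < h 0 ∧ 0 < ε ∧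
      ∃ p q : ℝ × ℝ, p.1 ∈ Set.Icc (0 : ℝ) 1 ∧ q.1 ∈ Set.Icc (0 : ℝ) 1 ∧
        ¬ ((((p.1 + q.1) / 2) * h (((p.2 + q.2) / 2) / ((p.1 + q.1) / 2 + ε))) ≤
            (p.1 * h (p.2 / (p.1 + ε)) + q.1 * h (q.2 / (q.1 + ε))) / 2) := by
  have hconv : ConvexOn ℝ univ (fun t : ℝ => t ^ 2 + 1) :=
    (Even.convexOn_pow even_two).add (convexOn_const 1 convex_univ)
  have hne : ∃ s t : ℝ, (fun t : ℝ => t ^ 2 + 1) s ≠ (fun t : ℝ => t ^ 2 + 1) t :=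
    ⟨1, 0, by norm_num⟩
  exact ⟨fun t => t ^ 2 + 1, 1, hconv, hne, by norm_num, one_pos,
    not_midpointConvex_mul_comp_div_add hconv hne one_pos⟩
end
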